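/- For all t, s ∈ [0,1], the double series Ψ_{0,0}(t)·Ψ_{0,0}(s) + Σ_{n=1}^∞ Σ_{k=0}^{2^(n−1)−1} Ψ_{n,k}(t)·Ψ_{n,k}(s) converges and equals Γ·min(t,s), which is the covariance of the Wiener process started at 0. -/
import Mathlib
open Finset Filter Topology

/-- The Haar-derived basis element `Ψ_{n,k}` for the Wiener process with diffusion
coefficient `Γ`.  For `n = 0` (and `k = 0`) this is `Ψ_{0,0}(t) = √Γ·t`; for `n ≥ 1`
it is the triangular wedge `√Γ·2^((n−1)/2)`-sloped function supported on
`[2k·2^(−n), 2(k+1)·2^(−n)]`. -/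
noncomputable def Psi (Γ : ℝ) (n k : ℕ) (t : ℝ) : ℝ :=
  if n = 0 then Real.sqrt Γ * t
  else if 2 * (k : ℝ) * 2 ^ (-(n : ℤ)) ≤ t ∧ t ≤ (2 * (k : ℝ) + 1) * 2 ^ (-(n : ℤ)) then
    Real.sqrt Γ * 2 ^ (((n : ℝ) - 1) / 2) * (t - 2 * (k : ℝ) * 2 ^ (-(n : ℤ)))
  else if (2 * (k : ℝ) + 1) * 2 ^ (-(n : ℤ)) ≤ t ∧ t ≤ 2 * ((k : ℝ) + 1) * 2 ^ (-(n : ℤ)) then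
    Real.sqrt Γ * 2 ^ (((n : ℝ) - 1) / 2) * (2 * ((k : ℝ) + 1) * 2 ^ (-(n : ℤ)) - t)
  else 0

lemma psi_scale (Γ : ℝ) (n k : ℕ) (x : ℝ) :
    Psi Γ n k x = Real.sqrt Γ * Psi 1 n k x := by
  unfold Psi
  split_ifs <;> simp [Real.sqrt_one] <;> ring

lemma psi_succ_def (N k : ℕ) (x : ℝ) :
    Psi 1 (N+1) k x =
      (if 2*(k:ℝ) * ((2:ℝ)^(N+1))⁻¹ ≤ x ∧ x ≤ (2*(k:ℝ)+1) * ((2:ℝ)^(N+1))⁻¹ then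
        (2:ℝ)^((N:ℝ)/2) * (x - 2*(k:ℝ)*((2:ℝ)^(N+1))⁻¹)
      else if (2*(k:ℝ)+1)*((2:ℝ)^(N+1))⁻¹ ≤ x ∧ x ≤ 2*((k:ℝ)+1)*((2:ℝ)^(N+1))⁻¹ then
        (2:ℝ)^((N:ℝ)/2) * (2*((k:ℝ)+1)*((2:ℝ)^(N+1))⁻¹ - x)
      else 0) := by
  unfold Psi
  rw [if_neg (Nat.succ_ne_zero N)]
  have h1 : ((2:ℝ)^(-((N+1:ℕ):ℤ))) = ((2:ℝ)^(N+1))⁻¹ := by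
    rw [zpow_neg, zpow_natCast]
  have h2 : ((((N+1:ℕ)):ℝ) - 1)/2 = (N:ℝ)/2 := by push_cast; ring
  rw [h1, h2, Real.sqrt_one]; simp

lemma psi_support {N k : ℕ} {x : ℝ} (hx : Psi 1 (N+1) k x ≠ 0) :
    (k:ℝ) < 2^N * x ∧ 2^N * x < (k:ℝ)+1 := by
  have hP : (0:ℝ) < 2^N := by positivity
  have hc : (0:ℝ) < (2:ℝ)^((N:ℝ)/2) := Real.rpow_pos_of_pos two_pos _
  have hps : ((2:ℝ)^(N+1))⁻¹ = (2 * 2^N)⁻¹ := by rw [pow_succ]; ring_nf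
  rw [psi_succ_def, hps] at hx
  split_ifs at hx with h1 h2
  · obtain ⟨ha, hb⟩ := h1
    have hne : x - 2*(k:ℝ)*(2*2^N)⁻¹ ≠ 0 := fun h => hx (by rw [h, mul_zero])
    have hgt : 2*(k:ℝ)*(2*2^N)⁻¹ < x := lt_of_le_of_ne ha (fun h => hne (by rw [← h]; ring))
    have e1 : (2:ℝ)^N * (2*(k:ℝ)*(2*2^N)⁻¹) = k := by field_simp
    have e2 : (2:ℝ)^N * ((2*(k:ℝ)+1)*(2*2^N)⁻¹) = (2*(k:ℝ)+1)/2 := by field_simp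
    have g1 := mul_lt_mul_of_pos_left hgt hP
    have g2 := mul_le_mul_of_nonneg_left hb hP.le
    rw [e1] at g1
    rw [e2] at g2
    constructor
    · linarith
    · linarith
  · obtain ⟨ha, hb⟩ := h2
    have hne : 2*((k:ℝ)+1)*(2*2^N)⁻¹ - x ≠ 0 := fun h => hx (by rw [h, mul_zero])
    have hlt : x < 2*((k:ℝ)+1)*(2*2^N)⁻¹ :=
      lt_of_le_of_ne hb (fun h => hne (by rw [h]; ring))
    have e2 : (2:ℝ)^N * ((2*(k:ℝ)+1)*(2*2^N)⁻¹) = (2*(k:ℝ)+1)/2 := by field_simp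
    have e3 : (2:ℝ)^N * (2*((k:ℝ)+1)*(2*2^N)⁻¹) = (k:ℝ)+1 := by field_simp
    have g1 := mul_le_mul_of_nonneg_left ha hP.le
    have g2 := mul_lt_mul_of_pos_left hlt hP
    rw [e2] at g1
    rw [e3] at g2
    constructor
    · linarith
    · linarith
  · exact absurd rfl hx

lemma psi_nonneg (Γ : ℝ) (n k : ℕ) (x : ℝ) (hΓ : 0 ≤ Γ) (hx : 0 ≤ x) :
    0 ≤ Psi Γ n k x := by
  have h0 : (0:ℝ) ≤ Real.sqrt Γ := Real.sqrt_nonneg _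
  have hc : (0:ℝ) ≤ (2:ℝ)^(((n:ℝ)-1)/2) := (Real.rpow_pos_of_pos two_pos _).le
  unfold Psi
  split_ifs with h1 h2 h3
  · positivity
  · exact mul_nonneg (mul_nonneg h0 hc) (sub_nonneg.2 h2.1)
  · exact mul_nonneg (mul_nonneg h0 hc) (sub_nonneg.2 h3.2)
  · exact le_refl _

/-- Dyadic bilinear interpolation of `min u v` at level `N` (assuming `u ≤ v`). -/
noncomputable def EE (u v : ℝ) (N : ℕ) : ℝ :=
  min u ((⌊(2:ℝ)^N * v⌋ : ℝ) / 2^N)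
    + max (u - (⌊(2:ℝ)^N * v⌋ : ℝ) / 2^N) 0
      * (v - (⌊(2:ℝ)^N * v⌋ : ℝ) / 2^N) * 2^N

lemma EE_zero {u v : ℝ} (hu : 0 ≤ u) (huv : u ≤ v) (hv : v ≤ 1) :
    EE u v 0 = u * v := by
  unfold EE
  rcases eq_or_lt_of_le hv with h | h
  · have : ⌊(2:ℝ)^0 * v⌋ = 1 := by rw [h]; norm_num
    rw [this]
    norm_num
    rw [min_eq_left (le_trans huv hv), max_eq_right (by linarith), h]
    ring
  · have : ⌊(2:ℝ)^0 * v⌋ = 0 := by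
      rw [Int.floor_eq_zero_iff]; constructor <;> simp <;> linarith
    rw [this]
    norm_num
    rw [min_eq_right hu, max_eq_left hu]
    ring
lemma EE_one {u : ℝ} (hu0 : 0 ≤ u) (hu : u ≤ 1) (M : ℕ) : EE u 1 M = u := by
  unfold EE
  have h1 : ⌊(2:ℝ)^M * 1⌋ = 2^M := by
    rw [mul_one]
    have : ((2:ℝ)^M) = ((2^M : ℤ):ℝ) := by push_cast; ring
    rw [this, Int.floor_intCast]
  have hP : (0:ℝ) < 2^M := by positivity
  rw [h1]
  push_cast
  rw [div_self hP.ne', min_eq_left hu, max_eq_right (by linarith)]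
  ring

lemma EE_eval_low {u v : ℝ} {N : ℕ} (h : u ≤ (⌊(2:ℝ)^N*v⌋:ℝ)/2^N) : EE u v N = u := by
  unfold EE
  rw [min_eq_left h, max_eq_right (by linarith)]
  ring

lemma EE_eval_high {u v : ℝ} {N : ℕ} (h : (⌊(2:ℝ)^N*v⌋:ℝ)/2^N ≤ u) :
    EE u v N = (⌊(2:ℝ)^N*v⌋:ℝ)/2^N
      + (u - (⌊(2:ℝ)^N*v⌋:ℝ)/2^N) * (v - (⌊(2:ℝ)^N*v⌋:ℝ)/2^N) * 2^N := by
  unfold EE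
  rw [min_eq_right h, max_eq_left (by linarith)]

set_option maxHeartbeats 2000000 in
lemma EE_step {u v : ℝ} (hu : 0 ≤ u) (huv : u ≤ v) (hv : v ≤ 1) (N : ℕ) :
    ∑ k ∈ Finset.range (2^N), Psi 1 (N+1) k u * Psi 1 (N+1) k v
      = EE u v (N+1) - EE u v N := by
  have hP : (0:ℝ) < 2^N := by positivity
  have hv0 : 0 ≤ v := le_trans hu huv
  rcases eq_or_lt_of_le hv with hv1 | hv1
  · -- v = 1 : every term vanishes and both interpolants equal u
    subst hv1
    have hz : ∀ k ∈ Finset.range (2^N), Psi 1 (N+1) k u * Psi 1 (N+1) k (1:ℝ) = 0 := by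
      intro k hk
      by_contra hne
      have hv' : Psi 1 (N+1) k (1:ℝ) ≠ 0 := fun h => hne (by rw [h, mul_zero])
      have h2 := (psi_support hv').2
      rw [mul_one] at h2
      have hk' := Finset.mem_range.1 hk
      have : (2^N : ℕ) < k + 1 := by exact_mod_cast h2
      omega
    rw [Finset.sum_eq_zero hz, EE_one hu huv, EE_one hu huv]
    ring
  · -- main case  v < 1
    set K := ⌊(2:ℝ)^N * v⌋ with hKdef
    have hK0 : (0:ℤ) ≤ K := Int.floor_nonneg.2 (by positivity)
    have hKle : (K:ℝ) ≤ 2^N * v := Int.floor_le _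
    have hKgt : (2:ℝ)^N * v < K + 1 := Int.lt_floor_add_one _
    have hKlt : (K:ℝ) < 2^N := by nlinarith
    set k₀ := K.toNat with hk₀def
    have hcast : ((k₀:ℕ):ℝ) = (K:ℝ) := by
      rw [hk₀def]; exact_mod_cast Int.toNat_of_nonneg hK0
    have hmem : k₀ ∈ Finset.range (2^N) := by
      rw [Finset.mem_range]
      have h' : ((k₀:ℕ):ℝ) < ((2^N : ℕ):ℝ) := by rw [hcast]; push_cast; exact hKlt
      exact_mod_cast h'
    rw [Finset.sum_eq_single_of_mem k₀ hmem (fun b hb hbk => ?_)]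
    swap
    · by_contra hne
      have hv' : Psi 1 (N+1) b v ≠ 0 := fun h => hne (by rw [h, mul_zero])
      obtain ⟨hb1, hb2⟩ := psi_support hv'
      have hfb : ⌊(2:ℝ)^N * v⌋ = (b:ℤ) := by
        rw [Int.floor_eq_iff]
        constructor
        · exact_mod_cast hb1.le
        · push_cast; exact hb2
      exact hbk (by rw [hk₀def, hKdef, hfb]; simp)
    -- now the single surviving term
    set P := (2:ℝ)^N with hPdef
    have hPinv : P * P⁻¹ = 1 := mul_inv_cancel₀ hP.ne'
    have h2Pinv : (2*P) * (2*P)⁻¹ = 1 := mul_inv_cancel₀ (by positivity)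
    set c := (2:ℝ)^((N:ℝ)/2) with hcdef
    have hcc : c * c = P := by
      rw [hcdef, ← Real.rpow_add two_pos, hPdef]
      rw [show (N:ℝ)/2 + (N:ℝ)/2 = ((N:ℕ):ℝ) from by ring, Real.rpow_natCast]
    have hprod : ∀ x y : ℝ, (c*x)*(c*y) = P*(x*y) := by
      intro x y; rw [show (c*x)*(c*y) = (c*c)*(x*y) from by ring, hcc]
    set a := (K:ℝ)/P with hadef
    set m := a + (2*P)⁻¹ with hmdef
    set bb := a + P⁻¹ with hbbdef
    have haK : P * a = K := by rw [hadef]; field_simp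
    have h2P : ((2:ℝ)^(N+1)) = 2*P := by rw [pow_succ]; ring
    have hea : 2*(k₀:ℝ)*((2:ℝ)^(N+1))⁻¹ = a := by
      rw [h2P, hcast, hadef]; field_simp
    have hem : (2*(k₀:ℝ)+1)*((2:ℝ)^(N+1))⁻¹ = m := by
      rw [h2P, hcast, hmdef, hadef]; field_simp
    have heb : 2*((k₀:ℝ)+1)*((2:ℝ)^(N+1))⁻¹ = bb := by
      rw [h2P, hcast, hbbdef, hadef]; field_simp
    have hva : a ≤ v := by rw [hadef, div_le_iff₀ hP]; linarith
    have hvb : v < bb := by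
      have h1 : P⁻¹ * (P * v) = v := by field_simp
      have h2 : P⁻¹ * ((K:ℝ)+1) = bb := by rw [hbbdef, hadef]; field_simp
      have h3 := mul_lt_mul_of_pos_left hKgt (inv_pos.2 hP)
      rw [h1, h2] at h3; exact h3
    have ham : a ≤ m := by
      have hpos : (0:ℝ) < (2*P)⁻¹ := by positivity
      rw [hmdef]; linarith
    have hmbb : m ≤ bb := by
      rw [hmdef, hbbdef]
      have : (2*P)⁻¹ ≤ P⁻¹ := by
        rw [mul_inv]
        nlinarith [inv_pos.2 hP]
      linarith
    have hPsi : ∀ x : ℝ, Psi 1 (N+1) k₀ x =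
        if a ≤ x ∧ x ≤ m then c*(x-a) else if m ≤ x ∧ x ≤ bb then c*(bb - x) else 0 := by
      intro x
      rw [psi_succ_def, hea, hem, heb, ← hcdef]
    have heaN : ((⌊(2:ℝ)^N*v⌋:ℤ):ℝ)/2^N = a := rfl
    rcases lt_or_ge v m with hvm | hvm
    · -- v in the left half of the cell
      have hF : ⌊(2:ℝ)^(N+1) * v⌋ = 2*K := by
        have hm2 : 2*P*m = 2*(K:ℝ)+1 := by
          rw [hmdef]; linear_combination 2*haK + h2Pinv
        rw [Int.floor_eq_iff, h2P]
        constructor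
        · push_cast; linarith
        · push_cast
          linarith [mul_lt_mul_of_pos_left hvm (show (0:ℝ) < 2*P by positivity), hm2]
      have ha' : ((⌊(2:ℝ)^(N+1)*v⌋:ℤ):ℝ)/2^(N+1) = a := by
        rw [hF, h2P, hadef]; push_cast; field_simp
      rcases le_or_gt u a with hua | hua
      · have hpsiu : Psi 1 (N+1) k₀ u = 0 := by
          rw [hPsi]
          split_ifs with c1 c2
          · rw [le_antisymm hua c1.1, sub_self, mul_zero]
          · exfalso
            have hpos : (0:ℝ) < (2*P)⁻¹ := by positivity
            rw [hmdef] at c2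
            linarith [c2.1]
          · rfl
        rw [hpsiu, zero_mul,
          EE_eval_low (show u ≤ ((⌊(2:ℝ)^(N+1)*v⌋:ℤ):ℝ)/2^(N+1) by rw [ha']; exact hua),
          EE_eval_low (show u ≤ ((⌊(2:ℝ)^N*v⌋:ℤ):ℝ)/2^N by rw [heaN]; exact hua)]
        ring
      · have hpsiu : Psi 1 (N+1) k₀ u = c*(u-a) := by
          rw [hPsi, if_pos ⟨hua.le, by linarith⟩]
        have hpsiv : Psi 1 (N+1) k₀ v = c*(v-a) := by
          rw [hPsi, if_pos ⟨hva, hvm.le⟩]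
        rw [hpsiu, hpsiv, hprod,
          EE_eval_high (show ((⌊(2:ℝ)^(N+1)*v⌋:ℤ):ℝ)/2^(N+1) ≤ u by rw [ha']; exact hua.le),
          EE_eval_high (show ((⌊(2:ℝ)^N*v⌋:ℤ):ℝ)/2^N ≤ u by rw [heaN]; exact hua.le),
          ha', heaN, h2P]
        ring
    · -- v in the right half of the cell
      have hF : ⌊(2:ℝ)^(N+1) * v⌋ = 2*K+1 := by
        have hm2 : 2*P*m = 2*(K:ℝ)+1 := by
          rw [hmdef]; linear_combination 2*haK + h2Pinv
        have hbb2 : 2*P*bb = 2*(K:ℝ)+2 := by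
          rw [hbbdef]; linear_combination 2*haK + 2*hPinv
        rw [Int.floor_eq_iff, h2P]
        constructor
        · push_cast
          linarith [mul_le_mul_of_nonneg_left hvm (show (0:ℝ) ≤ 2*P by positivity), hm2]
        · push_cast
          linarith [mul_lt_mul_of_pos_left hvb (show (0:ℝ) < 2*P by positivity), hbb2]
      have ha' : ((⌊(2:ℝ)^(N+1)*v⌋:ℤ):ℝ)/2^(N+1) = m := by
        rw [hF, h2P, hmdef, hadef]; push_cast; field_simp
      have hbm : bb - m = m - a := by
        rw [hmdef, hbbdef, mul_inv]; ring
      have hpsiv : Psi 1 (N+1) k₀ v = c*(bb - v) := by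
        rw [hPsi]
        split_ifs with c1 c2
        · have hveq : v = m := le_antisymm c1.2 hvm
          rw [hveq, show bb - m = m - a from hbm]
        · rfl
        · exact absurd ⟨hvm, hvb.le⟩ c2
      rcases le_or_gt u a with hua | hua
      · have hpsiu : Psi 1 (N+1) k₀ u = 0 := by
          rw [hPsi]
          split_ifs with c1 c2
          · rw [le_antisymm hua c1.1, sub_self, mul_zero]
          · exfalso
            have hpos : (0:ℝ) < (2*P)⁻¹ := by positivity
            rw [hmdef] at c2
            linarith [c2.1]
          · rfl
        rw [hpsiu, zero_mul,
          EE_eval_low (show u ≤ ((⌊(2:ℝ)^(N+1)*v⌋:ℤ):ℝ)/2^(N+1) by rw [ha']; linarith),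
          EE_eval_low (show u ≤ ((⌊(2:ℝ)^N*v⌋:ℤ):ℝ)/2^N by rw [heaN]; exact hua)]
        ring
      · rcases le_or_gt u m with hum | hum
        · have hpsiu : Psi 1 (N+1) k₀ u = c*(u-a) := by
            rw [hPsi, if_pos ⟨hua.le, hum⟩]
          rw [hpsiu, hpsiv, hprod,
            EE_eval_low (show u ≤ ((⌊(2:ℝ)^(N+1)*v⌋:ℤ):ℝ)/2^(N+1) by rw [ha']; exact hum),
            EE_eval_high (show ((⌊(2:ℝ)^N*v⌋:ℤ):ℝ)/2^N ≤ u by rw [heaN]; exact hua.le),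
            heaN]
          rw [hbbdef]
          linear_combination (u - a) * hPinv
        · have hpsiu : Psi 1 (N+1) k₀ u = c*(bb - u) := by
            rw [hPsi]
            split_ifs with c1 c2
            · exfalso; linarith [c1.2]
            · rfl
            · exact absurd ⟨hum.le, by linarith⟩ c2
          rw [hpsiu, hpsiv, hprod,
            EE_eval_high (show ((⌊(2:ℝ)^(N+1)*v⌋:ℤ):ℝ)/2^(N+1) ≤ u by rw [ha']; exact hum.le),
            EE_eval_high (show ((⌊(2:ℝ)^N*v⌋:ℤ):ℝ)/2^N ≤ u by rw [heaN]; exact hua.le),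
            ha', heaN, h2P]
          rw [hbbdef, hmdef, mul_inv]
          field_simp
          ring

lemma EE_close {u v : ℝ} (huv : u ≤ v) (N : ℕ) :
    |EE u v N - u| ≤ ((2:ℝ)^N)⁻¹ := by
  have hP : (0:ℝ) < 2^N := by positivity
  have hKle : ((⌊(2:ℝ)^N * v⌋:ℤ):ℝ) ≤ 2^N * v := Int.floor_le _
  have hKgt : (2:ℝ)^N * v < (⌊(2:ℝ)^N * v⌋:ℤ) + 1 := Int.lt_floor_add_one _
  set a := ((⌊(2:ℝ)^N * v⌋:ℤ):ℝ) / 2^N with hadef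
  have ha1 : a ≤ v := by rw [hadef, div_le_iff₀ hP]; linarith
  have ha2 : v - a < ((2:ℝ)^N)⁻¹ := by
    have h1 : ((2:ℝ)^N)⁻¹ * (2^N * v) = v := by field_simp
    have h2 : ((2:ℝ)^N)⁻¹ * (((⌊(2:ℝ)^N * v⌋:ℤ):ℝ) + 1) = a + ((2:ℝ)^N)⁻¹ := by
      rw [hadef]; field_simp
    have h3 := mul_lt_mul_of_pos_left hKgt (inv_pos.2 hP)
    rw [h1, h2] at h3
    linarith
  unfold EE
  rw [← hadef]
  rcases le_or_gt u a with h | h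
  · rw [min_eq_left h, max_eq_right (by linarith)]
    simp only [zero_mul, add_zero, sub_self, abs_zero]
    positivity
  · rw [min_eq_right h.le, max_eq_left (by linarith)]
    have he : a + (u-a) * (v-a) * 2^N - u = (u-a) * ((v-a) * 2^N - 1) := by ring
    have hb1 : 0 ≤ (v-a) * 2^N := by nlinarith
    have hb2 : (v-a) * 2^N ≤ 1 := by
      have := mul_lt_mul_of_pos_left ha2 hP
      have hinv : (2:ℝ)^N * ((2:ℝ)^N)⁻¹ = 1 := mul_inv_cancel₀ hP.ne'
      nlinarith
    rw [he, abs_le]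
    constructor <;> nlinarith

/-- For all `t, s ∈ [0,1]`, the double series
`Ψ_{0,0}(t)·Ψ_{0,0}(s) + Σ_{n=1}^∞ Σ_{k=0}^{2^(n−1)−1} Ψ_{n,k}(t)·Ψ_{n,k}(s)`
(grouped by levels `n`; note `Finset.range (2 ^ (0 - 1)) = {0}` so the `n = 0` term is
`Ψ_{0,0}(t)·Ψ_{0,0}(s)`) converges and equals `Γ·min(t,s)`, the covariance of the
Wiener process started at `0`. -/
theorem wiener_covariance (Γ : ℝ) (hΓ : 0 < Γ)
    (t s : ℝ) (ht : t ∈ Set.Icc (0 : ℝ) 1) (hs : s ∈ Set.Icc (0 : ℝ) 1) :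
    HasSum (fun n : ℕ => ∑ k ∈ Finset.range (2 ^ (n - 1)), Psi Γ n k t * Psi Γ n k s)
      (Γ * min t s) := by
  obtain ⟨ht0, ht1⟩ := ht
  obtain ⟨hs0, hs1⟩ := hs
  set u := min t s with hudef
  set v := max t s with hvdef
  have hu0 : 0 ≤ u := le_min ht0 hs0
  have huv : u ≤ v := min_le_max
  have hv1 : v ≤ 1 := max_le ht1 hs1
  have hterm : ∀ n k, Psi Γ n k t * Psi Γ n k s = Γ * (Psi 1 n k u * Psi 1 n k v) := by
    intro n k
    rw [psi_scale Γ, psi_scale Γ]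
    have hsq : Real.sqrt Γ * Real.sqrt Γ = Γ := Real.mul_self_sqrt hΓ.le
    rcases le_total t s with h | h
    · rw [hudef, hvdef, min_eq_left h, max_eq_right h]
      linear_combination (Psi 1 n k t * Psi 1 n k s) * hsq
    · rw [hudef, hvdef, min_eq_right h, max_eq_left h]
      linear_combination (Psi 1 n k s * Psi 1 n k t) * hsq
  have hmain : HasSum
      (fun n : ℕ => ∑ k ∈ Finset.range (2 ^ (n - 1)), Psi 1 n k u * Psi 1 n k v) u := by
    have hv0 : 0 ≤ v := le_trans hu0 huv
    have hnonneg : ∀ n : ℕ,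
        0 ≤ ∑ k ∈ Finset.range (2 ^ (n - 1)), Psi 1 n k u * Psi 1 n k v := by
      intro n
      exact Finset.sum_nonneg fun k _ => mul_nonneg
        (psi_nonneg 1 n k _ zero_le_one hu0) (psi_nonneg 1 n k _ zero_le_one hv0)
    rw [hasSum_iff_tendsto_nat_of_nonneg hnonneg]
    rw [← tendsto_add_atTop_iff_nat 1]
    have key : ∀ M : ℕ, ∑ n ∈ Finset.range (M+1),
        (∑ k ∈ Finset.range (2 ^ (n - 1)), Psi 1 n k u * Psi 1 n k v) = EE u v M := by
      intro M
      induction M with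
      | zero =>
        rw [Finset.sum_range_one]
        have h1 : (2:ℕ) ^ (0 - 1) = 1 := rfl
        rw [h1, Finset.sum_range_one, EE_zero hu0 huv hv1]
        unfold Psi
        rw [if_pos rfl, if_pos rfl, Real.sqrt_one, one_mul, one_mul]
      | succ M ih =>
        rw [Finset.sum_range_succ, ih]
        have h1 : (2:ℕ) ^ (M + 1 - 1) = 2 ^ M := rfl
        rw [h1, EE_step hu0 huv hv1 M]
        ring
    have hEE : Filter.Tendsto (fun M : ℕ => EE u v M) atTop (nhds u) := by
      have h0 : Filter.Tendsto (fun M : ℕ => ((2:ℝ)^M)⁻¹) atTop (nhds 0) := by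
        have := tendsto_pow_atTop_nhds_zero_of_lt_one
          (by norm_num : (0:ℝ) ≤ 2⁻¹) (by norm_num : (2:ℝ)⁻¹ < 1)
        simpa [inv_pow] using this
      have hsq : Filter.Tendsto (fun M : ℕ => EE u v M - u) atTop (nhds 0) := by
        refine squeeze_zero_norm (fun M => ?_) h0
        simpa [Real.norm_eq_abs] using EE_close huv (N := M)
      have := hsq.add_const u
      simpa using this
    refine Filter.Tendsto.congr (fun M => (key M).symm) hEE
  have := hmain.mul_left Γ
  refine HasSum.congr_fun this fun n => ?_
  rw [Finset.mul_sum]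
  exact (Finset.sum_congr rfl fun k _ => hterm n k)
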